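/- arXiv:1104.1403 — 9 statements merged into one kernel-verified Lean document; each statement's English description precedes it below -/
import Mathlib

section
/- For every positive integer k and every real s ≥ k, the falling factorial [s]_k = s(s-1)⋯(s-k+1) satisfies [s]_k ≥ (s - μk)^k, where μ = (e-1)/e. -/
/-!
Put `t = s - k ≥ 0`, so that `[s]_k = ∏_{j<k} (t + (j + 1))` and `s - μk = t + k/e`.
The geometric mean is superadditive (AM-GM applied to the fractions `aᵢ/(aᵢ+bᵢ)` and
`bᵢ/(aᵢ+bᵢ)`, whose arithmetic means add up to `1`), so the geometric mean of the
`t + (j + 1)` is at least `t + (k!)^{1/k}`, and `(k!)^{1/k} ≥ k/e` because `k^k/k! ≤ e^k`.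
-/

open Finset Real

theorem prod_rpow_inv_card_add_le {ι : Type*} {s : Finset ι} (hs : s.Nonempty) {a b : ι → ℝ}
    (ha : ∀ i ∈ s, 0 ≤ a i) (hb : ∀ i ∈ s, 0 ≤ b i) :
    (∏ i ∈ s, a i) ^ (#s : ℝ)⁻¹ + (∏ i ∈ s, b i) ^ (#s : ℝ)⁻¹ ≤
      (∏ i ∈ s, (a i + b i)) ^ (#s : ℝ)⁻¹ := by
  have hn : (#s : ℝ) ≠ 0 := Nat.cast_ne_zero.2 hs.card_pos.ne'
  have hw : ∑ _i ∈ s, (#s : ℝ)⁻¹ = 1 := by rw [sum_const, nsmul_eq_mul, mul_inv_cancel₀ hn]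
  by_cases hpos : ∀ i ∈ s, 0 < a i + b i
  · have hP : 0 < ∏ i ∈ s, (a i + b i) := prod_pos hpos
    have amgm : ∀ x : ι → ℝ, (∀ i ∈ s, 0 ≤ x i) →
        (∏ i ∈ s, x i) ^ (#s : ℝ)⁻¹ / (∏ i ∈ s, (a i + b i)) ^ (#s : ℝ)⁻¹ ≤
          ∑ i ∈ s, (#s : ℝ)⁻¹ * (x i / (a i + b i)) := by
      intro x hx
      rw [← div_rpow (prod_nonneg hx) hP.le, ← prod_div_distrib,
        ← finsetProd_rpow _ _ fun i hi => div_nonneg (hx i hi) (hpos i hi).le]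
      exact geom_mean_le_arith_mean_weighted s _ _ (fun _ _ => by positivity) hw
        fun i hi => div_nonneg (hx i hi) (hpos i hi).le
    have hsum : ∑ i ∈ s, (#s : ℝ)⁻¹ * (a i / (a i + b i)) +
        ∑ i ∈ s, (#s : ℝ)⁻¹ * (b i / (a i + b i)) = 1 := by
      rw [← sum_add_distrib, ← hw]
      exact sum_congr rfl fun i hi => by field_simp [(hpos i hi).ne']
    rw [← div_le_one (rpow_pos_of_pos hP _), add_div]
    linarith [amgm a ha, amgm b hb]
  · push Not at hpos
    obtain ⟨i, hi, hab⟩ := hpos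
    have hai : a i = 0 := by linarith [ha i hi, hb i hi]
    have hbi : b i = 0 := by linarith [ha i hi, hb i hi]
    rw [prod_eq_zero hi hai, prod_eq_zero hi hbi, zero_rpow (inv_ne_zero hn), add_zero]
    exact rpow_nonneg (prod_nonneg fun j hj => add_nonneg (ha j hj) (hb j hj)) _

theorem pow_add_le_prod_add {ι : Type*} (s : Finset ι) {a : ι → ℝ} (ha : ∀ i ∈ s, 0 ≤ a i)
    {t c : ℝ} (ht : 0 ≤ t) (hc : 0 ≤ c) (hca : c ^ #s ≤ ∏ i ∈ s, a i) :
    (t + c) ^ #s ≤ ∏ i ∈ s, (t + a i) := by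
  rcases s.eq_empty_or_nonempty with rfl | hs
  · simp
  have hn : #s ≠ 0 := hs.card_pos.ne'
  have hcG : c ≤ (∏ i ∈ s, a i) ^ (#s : ℝ)⁻¹ := by
    rwa [le_rpow_inv_iff_of_pos hc (prod_nonneg ha) (by positivity), rpow_natCast]
  have hsup := prod_rpow_inv_card_add_le hs (fun _ _ => ht) ha
  rw [prod_const, pow_rpow_inv_natCast ht hn] at hsup
  calc (t + c) ^ #s ≤ ((∏ i ∈ s, (t + a i)) ^ (#s : ℝ)⁻¹) ^ #s :=
        pow_le_pow_left₀ (by positivity) (by linarith) _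
    _ = ∏ i ∈ s, (t + a i) :=
        rpow_inv_natCast_pow (prod_nonneg fun i hi => add_nonneg ht (ha i hi)) hn

theorem div_exp_one_pow_le_factorial (n : ℕ) : ((n : ℝ) / exp 1) ^ n ≤ n.factorial := by
  have h := pow_div_factorial_le_exp (n : ℝ) n.cast_nonneg n
  rw [div_le_iff₀ (by positivity)] at h
  rw [div_pow, exp_one_pow, div_le_iff₀ (exp_pos _), mul_comm]
  exact h

theorem prod_range_sub_eq_prod_range_add {R : Type*} [CommRing R] (s : R) (k : ℕ) :
    ∏ i ∈ range k, (s - i) = ∏ j ∈ range k, (s - k + (j + 1)) := by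
  rw [← prod_range_reflect]
  refine prod_congr rfl fun j hj => ?_
  have hjk := mem_range.1 hj
  rw [Nat.cast_sub (by omega), Nat.cast_sub (by omega)]
  push_cast
  ring

theorem falling_factorial_ge_mu_general (k : ℕ) (s : ℝ) (hs : (k : ℝ) ≤ s) :
    (s - (Real.exp 1 - 1) / Real.exp 1 * (k : ℝ)) ^ k ≤
      ∏ i ∈ Finset.range k, (s - (i : ℝ)) := by
  have hbase : s - (exp 1 - 1) / exp 1 * k = s - k + k / exp 1 := by
    field_simp
    ring
  have hfact : ((k : ℝ) / exp 1) ^ #(range k) ≤ ∏ j ∈ range k, ((j : ℝ) + 1) := by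
    have h := div_exp_one_pow_le_factorial k
    rw [← prod_range_add_one_eq_factorial] at h
    rw [card_range]
    exact_mod_cast h
  rw [hbase, prod_range_sub_eq_prod_range_add]
  simpa using pow_add_le_prod_add (range k) (fun j _ => by positivity) (sub_nonneg.2 hs)
    (by positivity) hfact

/-- For every positive integer `k` and real `s ≥ k`, the falling factorial
`[s]_k` satisfies `[s]_k ≥ (s - μk)^k` with `μ = (e-1)/e`. -/
theorem falling_factorial_ge_mu (k : ℕ) (hk : 1 ≤ k) (s : ℝ) (hs : (k : ℝ) ≤ s) :
    (s - (Real.exp 1 - 1) / Real.exp 1 * (k : ℝ)) ^ k ≤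
      ∏ i ∈ Finset.range k, (s - (i : ℝ)) :=
  falling_factorial_ge_mu_general k s hs
end

section
/- Let Q(m,δ) denote the set of finite sequences (α_1,…,α_r) of positive integers with Σα_i = m, |Σ_i α_{2i-1} − Σ_i α_{2i}| ≤ 1, and |Σ_{i≤k} (−1)^{i−1} α_i| ≤ δ for all k. Then |Q(m,1)| = 2^⌊(m−1)/2⌋ for all m ≥ 1. -/
/-- `α` is a `δ`-deviation set of size `m`: a finite sequence of positive integers
summing to `m`, whose total alternating sum has absolute value at most `1`,
and all of whose partial alternating sums have absolute value at most `δ`. -/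
def IsDevSet (m δ : ℕ) (α : List ℕ) : Prop :=
  (∀ a ∈ α, 0 < a) ∧ α.sum = m ∧
  |∑ i ∈ Finset.range α.length, (-1 : ℤ) ^ i * (α.getD i 0 : ℤ)| ≤ 1 ∧
  ∀ k : ℕ, |∑ i ∈ Finset.range k, (-1 : ℤ) ^ i * (α.getD i 0 : ℤ)| ≤ (δ : ℤ)

/-- `zeta m δ` is the number of `δ`-deviation sets of size `m`. -/
noncomputable def zeta (m δ : ℕ) : ℕ := Nat.card {α : List ℕ // IsDevSet m δ α}

def altsum (l : List ℕ) (k : ℕ) : ℤ := ∑ i ∈ Finset.range k, (-1 : ℤ) ^ i * (l.getD i 0 : ℤ)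

lemma altsum_nil (k : ℕ) : altsum [] k = 0 := by simp [altsum]

lemma altsum_zero (l : List ℕ) : altsum l 0 = 0 := rfl

lemma altsum_cons (a : ℕ) (l : List ℕ) (k : ℕ) :
    altsum (a :: l) (k + 1) = (a : ℤ) - altsum l k := by
  unfold altsum
  rw [Finset.sum_range_succ']
  simp [pow_succ]
  ring

lemma isDevSet_iff (m : ℕ) (α : List ℕ) :
    IsDevSet m 1 α ↔ ((∀ a ∈ α, 0 < a) ∧ α.sum = m ∧ |altsum α α.length| ≤ 1 ∧
      ∀ k : ℕ, |altsum α k| ≤ 1) := by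
  simp [IsDevSet, altsum]

lemma isDevSet_iff' (m : ℕ) (α : List ℕ) :
    IsDevSet m 1 α ↔ ((∀ a ∈ α, 0 < a) ∧ α.sum = m ∧ ∀ k : ℕ, |altsum α k| ≤ 1) := by
  rw [isDevSet_iff]
  exact ⟨fun ⟨h1,h2,_,h4⟩ => ⟨h1,h2,h4⟩, fun ⟨h1,h2,h4⟩ => ⟨h1,h2,h4 _,h4⟩⟩

lemma peel2 (m : ℕ) (γ : List ℕ) :
    IsDevSet (m + 2) 1 (1 :: 2 :: γ) ↔ IsDevSet m 1 (1 :: γ) := by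
  have key : ∀ k, altsum (1 :: 2 :: γ) (k + 2) = -(altsum (1 :: γ) (k + 1)) := by
    intro k
    rw [show k + 2 = (k + 1) + 1 from rfl, altsum_cons, altsum_cons, altsum_cons]
    push_cast; ring
  rw [isDevSet_iff', isDevSet_iff']
  constructor
  · rintro ⟨h1, h2, h4⟩
    refine ⟨?_, ?_, ?_⟩
    · intro a ha
      rcases List.mem_cons.mp ha with rfl | h
      · norm_num
      · exact h1 a (by simp [h])
    · simp [List.sum_cons] at h2 ⊢; omega
    · intro k
      match k with
      | 0 => simp [altsum_zero]
      | k + 1 => have := h4 (k + 2); rw [key k, abs_neg] at this; exact this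
  · rintro ⟨h1, h2, h4⟩
    refine ⟨?_, ?_, ?_⟩
    · intro a ha
      rcases List.mem_cons.mp ha with rfl | ha
      · norm_num
      rcases List.mem_cons.mp ha with rfl | ha
      · norm_num
      · exact h1 a (by simp [ha])
    · simp [List.sum_cons] at h2 ⊢; omega
    · intro k
      match k with
      | 0 => simp [altsum_zero]
      | 1 => rw [altsum_cons, altsum_zero]; norm_num
      | k + 2 => rw [key k, abs_neg]; exact h4 (k + 1)

lemma peel11 (m : ℕ) (γ : List ℕ) :
    IsDevSet (m + 2) 1 (1 :: 1 :: 1 :: γ) ↔ IsDevSet m 1 (1 :: γ) := by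
  have key : ∀ k, altsum (1 :: 1 :: 1 :: γ) (k + 2) = altsum (1 :: γ) k := by
    intro k
    match k with
    | 0 =>
      rw [show (0:ℕ) + 2 = 1 + 1 from rfl, altsum_cons, altsum_cons, altsum_zero]
      norm_num
    | k + 1 =>
      rw [show k + 1 + 2 = (k + 2) + 1 from rfl, altsum_cons,
        show k + 2 = (k + 1) + 1 from rfl, altsum_cons, altsum_cons]
      push_cast; ring
  rw [isDevSet_iff', isDevSet_iff']
  constructor
  · rintro ⟨h1, h2, h4⟩
    refine ⟨?_, ?_, ?_⟩
    · intro a ha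
      rcases List.mem_cons.mp ha with rfl | h
      · norm_num
      · exact h1 a (by simp [h])
    · simp [List.sum_cons] at h2 ⊢; omega
    · intro k; rw [← key k]; exact h4 (k + 2)
  · rintro ⟨h1, h2, h4⟩
    refine ⟨?_, ?_, ?_⟩
    · intro a ha
      rcases List.mem_cons.mp ha with rfl | ha
      · norm_num
      rcases List.mem_cons.mp ha with rfl | ha
      · norm_num
      rcases List.mem_cons.mp ha with rfl | ha
      · norm_num
      · exact h1 a (by simp [ha])
    · simp [List.sum_cons] at h2 ⊢; omega
    · intro k
      match k with
      | 0 => simp [altsum_zero]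
      | 1 => rw [altsum_cons, altsum_zero]; norm_num
      | k + 2 => rw [key k]; exact h4 k
def blk : Bool → List ℕ := fun b => if b then [1, 1] else [2]

def dtail (m : ℕ) : List ℕ := if m % 2 = 0 then [1] else []

def rep (m : ℕ) (c : List Bool) : List ℕ := 1 :: (c.flatMap blk ++ dtail m)

lemma dtail_sub2 (m : ℕ) (hm : 2 ≤ m) : dtail (m - 2) = dtail m := by
  unfold dtail
  have : (m - 2) % 2 = m % 2 := by omega
  rw [this]

lemma blk_flat_inj : ∀ c₁ c₂ : List Bool, c₁.flatMap blk = c₂.flatMap blk → c₁ = c₂ := by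
  intro c₁
  induction c₁ with
  | nil =>
    intro c₂ h
    cases c₂ with
    | nil => rfl
    | cons b c => cases b <;> simp [blk] at h
  | cons b₁ c₁ ih =>
    intro c₂ h
    cases c₂ with
    | nil => cases b₁ <;> simp [blk] at h
    | cons b₂ c₂ =>
      cases b₁ <;> cases b₂ <;> simp [blk] at h
      · rw [ih _ h]
      · rw [ih _ h]

lemma sum_zero_of_pos (γ : List ℕ) (h1 : ∀ a ∈ γ, 0 < a) (h2 : γ.sum = 0) : γ = [] := by
  cases γ with
  | nil => rfl
  | cons a t =>
    have := h1 a (by simp)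
    simp [List.sum_cons] at h2
    omega

lemma char_fwd : ∀ m, 1 ≤ m → ∀ α, IsDevSet m 1 α →
    ∃ c : List Bool, c.length = (m - 1) / 2 ∧ α = rep m c := by
  intro m
  induction m using Nat.strong_induction_on with
  | _ m ih =>
    intro hm α h
    obtain ⟨h1, h2, h4⟩ := (isDevSet_iff' m α).mp h
    -- first entry is 1
    obtain ⟨γ, rfl⟩ : ∃ γ, α = 1 :: γ := by
      cases α with
      | nil => simp at h2; omega
      | cons a γ =>
        have hb := h4 1
        rw [altsum_cons, altsum_zero] at hb
        have ha := h1 a (by simp)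
        have : a = 1 := by
          rw [abs_le] at hb
          omega
        exact ⟨γ, by rw [this]⟩
    by_cases hm2 : m ≤ 2
    · -- base cases
      interval_cases m
      · -- m = 1
        have : γ = [] := by
          apply sum_zero_of_pos γ (fun a ha => h1 a (by simp [ha]))
          simp [List.sum_cons] at h2; omega
        exact ⟨[], by simp, by simp [this, rep, dtail]⟩
      · -- m = 2
        obtain ⟨b, t, rfl⟩ : ∃ b t, γ = b :: t := by
          cases γ with
          | nil => simp at h2
          | cons b t => exact ⟨b, t, rfl⟩
        have hb := h1 b (by simp)
        simp [List.sum_cons] at h2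
        have hb1 : b = 1 := by omega
        have : t = [] := by
          apply sum_zero_of_pos t (fun a ha => h1 a (by simp [ha]))
          omega
        subst hb1 this
        exact ⟨[], by simp, by simp [rep, dtail]⟩
    · -- m ≥ 3
      have hm3 : 3 ≤ m := by omega
      obtain ⟨b, τ, rfl⟩ : ∃ b τ, γ = b :: τ := by
        cases γ with
        | nil => simp at h2; omega
        | cons b t => exact ⟨b, t, rfl⟩
      have hb2 : b ≤ 2 := by
        have := h4 2
        rw [show (2:ℕ) = 1 + 1 from rfl, altsum_cons, altsum_cons, altsum_zero, abs_le] at this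
        push_cast at this
        omega
      have hbpos : 0 < b := h1 b (by simp)
      interval_cases b
      · -- b = 1 : next entry must be 1
        obtain ⟨g, τ', rfl⟩ : ∃ g τ', τ = g :: τ' := by
          cases τ with
          | nil => simp [List.sum_cons] at h2; omega
          | cons g t => exact ⟨g, t, rfl⟩
        have hgpos : 0 < g := h1 g (by simp)
        have hg1 : g = 1 := by
          have := h4 3
          rw [show (3:ℕ) = (1 + 1) + 1 from rfl, altsum_cons, altsum_cons, altsum_cons,
            altsum_zero, abs_le] at this
          push_cast at this
          omega
        subst hg1
        have h' : IsDevSet (m - 2) 1 (1 :: τ') := by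
          rw [← peel11 (m - 2) τ']
          rw [show m - 2 + 2 = m from by omega]
          exact h
        obtain ⟨c, hc1, hc2⟩ := ih (m - 2) (by omega) (by omega) _ h'
        refine ⟨true :: c, by simp [hc1]; omega, ?_⟩
        simp only [rep, dtail_sub2 m (by omega)] at hc2 ⊢
        simp only [List.flatMap_cons, blk]
        simp at hc2 ⊢
        exact hc2
      · -- b = 2
        have h' : IsDevSet (m - 2) 1 (1 :: τ) := by
          rw [← peel2 (m - 2) τ]
          rw [show m - 2 + 2 = m from by omega]
          exact h
        obtain ⟨c, hc1, hc2⟩ := ih (m - 2) (by omega) (by omega) _ h'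
        refine ⟨false :: c, by simp [hc1]; omega, ?_⟩
        simp only [rep, dtail_sub2 m (by omega)] at hc2 ⊢
        simp only [List.flatMap_cons, blk]
        simp at hc2 ⊢
        exact hc2

lemma devset_one : IsDevSet 1 1 [1] := by
  rw [isDevSet_iff']
  refine ⟨by simp, by simp, ?_⟩
  intro k
  match k with
  | 0 => simp [altsum_zero]
  | k + 1 => rw [altsum_cons, altsum_nil]; norm_num

lemma devset_two : IsDevSet 2 1 [1, 1] := by
  rw [isDevSet_iff']
  refine ⟨by simp, by simp, ?_⟩
  intro k
  match k with
  | 0 => simp [altsum_zero]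
  | 1 => rw [altsum_cons, altsum_zero]; norm_num
  | k + 2 =>
    rw [show k + 2 = (k + 1) + 1 from rfl, altsum_cons, altsum_cons, altsum_nil]
    norm_num

lemma char_bwd : ∀ c : List Bool, ∀ m, 1 ≤ m → c.length = (m - 1) / 2 →
    IsDevSet m 1 (rep m c) := by
  intro c
  induction c with
  | nil =>
    intro m hm hl
    simp at hl
    have : m = 1 ∨ m = 2 := by omega
    rcases this with rfl | rfl
    · have : rep 1 [] = [1] := by simp [rep, dtail]
      rw [this]; exact devset_one
    · have : rep 2 [] = [1, 1] := by simp [rep, dtail]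
      rw [this]; exact devset_two
  | cons b c ihc =>
    intro m hm hl
    simp at hl
    have hm3 : 3 ≤ m := by omega
    have h' := ihc (m - 2) (by omega) (by omega)
    rw [rep, dtail_sub2 m (by omega)] at h'
    cases b
    · have : rep m (false :: c) = 1 :: 2 :: (c.flatMap blk ++ dtail m) := by
        simp [rep, blk]
      rw [this]
      have h2 := (peel2 (m - 2) _).mpr h'
      rwa [show m - 2 + 2 = m from by omega] at h2
    · have : rep m (true :: c) = 1 :: 1 :: 1 :: (c.flatMap blk ++ dtail m) := by
        simp [rep, blk]
      rw [this]
      have h2 := (peel11 (m - 2) _).mpr h'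
      rwa [show m - 2 + 2 = m from by omega] at h2

lemma rep_inj (m : ℕ) : Function.Injective (rep m) := by
  intro c₁ c₂ h
  simp only [rep, List.cons.injEq, true_and] at h
  exact blk_flat_inj _ _ (List.append_cancel_right h)

/-- `ζ(m,1) = 2^⌊(m−1)/2⌋` for all `m ≥ 1`. -/
theorem zeta_one (m : ℕ) (hm : 1 ≤ m) : zeta m 1 = 2 ^ ((m - 1) / 2) := by
  set n := (m - 1) / 2 with hn
  let g : {c : List Bool // c.length = n} → {α : List ℕ // IsDevSet m 1 α} :=
    fun c => ⟨rep m c.1, char_bwd c.1 m hm c.2⟩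
  have hbij : Function.Bijective g := by
    constructor
    · intro c₁ c₂ hc
      have : rep m c₁.1 = rep m c₂.1 := congrArg Subtype.val hc
      exact Subtype.ext (rep_inj m this)
    · rintro ⟨α, hα⟩
      obtain ⟨c, hc1, hc2⟩ := char_fwd m hm α hα
      exact ⟨⟨c, hc1⟩, Subtype.ext hc2.symm⟩
  have h1 : zeta m 1 = Nat.card {c : List Bool // c.length = n} := by
    unfold zeta
    exact (Nat.card_eq_of_bijective g hbij).symm
  rw [h1]
  have h2 : Nat.card (List.Vector Bool n) = 2 ^ n := by
    rw [Nat.card_eq_fintype_card, card_vector]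
    simp
  exact h2
end

section
/- With ζ(m,δ) = |Q(m,δ)| counting δ-deviation sets of size m, one has ζ(m,2) = 3^⌊(m−1)/2⌋ for all m ≥ 1. -/
def altSum (γ : List ℕ) (k : ℕ) : ℤ :=
  ∑ i ∈ Finset.range k, (-1 : ℤ) ^ i * (γ.getD i 0 : ℤ)

@[simp] lemma altSum_zero (γ : List ℕ) : altSum γ 0 = 0 := by simp [altSum]

@[simp] lemma altSum_nil (k : ℕ) : altSum [] k = 0 := by simp [altSum]

@[simp] lemma altSum_cons_succ (a : ℕ) (γ : List ℕ) (k : ℕ) :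
    altSum (a :: γ) (k + 1) = a - altSum γ k := by
  simp only [altSum, Finset.sum_range_succ', List.getD_cons_succ, List.getD_cons_zero, pow_succ,
    mul_neg_one, neg_mul, Finset.sum_neg_distrib]
  ring

/-- The state `s` is the partial alternating sum so far, multiplied by the sign of the next term,
so that the next entry is always added; reading an entry `a` moves the state to `-(s + a)`. -/
def IsDevTail : ℤ → List ℕ → Prop
  | s, [] => |s| ≤ 1
  | s, a :: γ => 0 < a ∧ |s + a| ≤ 2 ∧ IsDevTail (-(s + a)) γ

lemma IsDevTail.pos : ∀ {s : ℤ} {γ : List ℕ}, IsDevTail s γ → ∀ a ∈ γ, 0 < a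
  | _, [], _ => by simp
  | _, _ :: _, ⟨ha, _, hγ⟩ => List.forall_mem_cons.2 ⟨ha, hγ.pos⟩

lemma isDevTail_iff {s : ℤ} {γ : List ℕ} :
    |s| ≤ 2 ∧ IsDevTail s γ ↔
      (∀ a ∈ γ, 0 < a) ∧ |s + altSum γ γ.length| ≤ 1 ∧
        ∀ k, |s + altSum γ k| ≤ 2 := by
  induction γ generalizing s with
  | nil =>
    simp only [IsDevTail, altSum_nil, add_zero]
    constructor
    · rintro ⟨h2, h1⟩
      exact ⟨by simp, h1, fun _ => h2⟩
    · rintro ⟨-, h1, h2⟩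
      exact ⟨h2 0, h1⟩
  | cons a γ ih =>
    have habs : ∀ x : ℤ, |s + (a - x)| = |-(s + a) + x| := fun x => by
      rw [← abs_neg]; ring_nf
    rw [← Nat.and_forall_add_one (p := fun k => |s + altSum (a :: γ) k| ≤ 2)]
    simp only [IsDevTail, List.forall_mem_cons, List.length_cons, altSum_cons_succ, altSum_zero,
      add_zero, habs]
    have := ih (s := -(s + a))
    rw [abs_neg] at this
    tauto

def devTails (n : ℕ) (s : ℤ) : Set (List ℕ) := {γ | IsDevTail s γ ∧ γ.sum = n}

lemma setOf_isDevSet_two (m : ℕ) : {α | IsDevSet m 2 α} = devTails m 0 := by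
  ext α
  have h := @isDevTail_iff 0 α
  simp only [abs_zero, zero_add, altSum, zero_le_two, true_and] at h
  simp only [devTails, IsDevSet, Set.mem_ofPred_eq, Nat.cast_ofNat, h]
  tauto

lemma devTails_finite (n : ℕ) (s : ℤ) : (devTails n s).Finite :=
  (Set.finite_range fun c : Composition n => c.blocks).subset fun γ ⟨hγ, hsum⟩ =>
    ⟨⟨γ, hγ.pos _, hsum⟩, rfl⟩

lemma devTails_zero (s : ℤ) : devTails 0 s = if |s| ≤ 1 then {[]} else ∅ := by
  ext (_ | ⟨a, γ⟩)
  · split_ifs <;> simp_all [devTails, IsDevTail]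
  · split_ifs <;> simp [devTails, IsDevTail] <;> omega

lemma nil_notMem_devTails {n : ℕ} (hn : n ≠ 0) (s : ℤ) : [] ∉ devTails n s :=
  fun h => hn h.2.symm

lemma devTails_eq_empty_of_two_le (n : ℕ) {s : ℤ} (hs : 2 ≤ s) : devTails n s = ∅ := by
  ext (_ | ⟨a, γ⟩) <;> simp [devTails, IsDevTail, abs_le] <;> omega

lemma isDevTail_succ_cons (s : ℤ) {a : ℕ} (ha : 0 < a) (γ : List ℕ) :
    IsDevTail s ((a + 1) :: γ) ↔ IsDevTail (s + 1) (a :: γ) := by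
  simp only [IsDevTail, ha, Nat.succ_pos, true_and, Nat.cast_add, Nat.cast_one,
    add_comm (a : ℤ) 1, add_assoc]

lemma List.modifyHead_add_one_eq_cons {x γ : List ℕ} {a : ℕ} :
    x.modifyHead (· + 1) = a :: γ ↔ ∃ b, a = b + 1 ∧ x = b :: γ := by
  cases x <;> simp [eq_comm]

/-- Peel one unit off the first entry: either that entry was `1` and the sign flips, or what is
left of it is still positive and the state just moves up by one. -/
lemma devTails_succ (n : ℕ) {s : ℤ} (hs : |s + 1| ≤ 2) :
    devTails (n + 1) s = List.cons 1 '' devTails n (-(s + 1)) ∪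
      List.modifyHead (· + 1) '' (devTails n (s + 1) \ {[]}) := by
  ext (_ | ⟨a, γ⟩)
  · simp [devTails]
  obtain _ | _ | a := a
  · simp [devTails, IsDevTail, List.modifyHead_add_one_eq_cons]
  · simp [devTails, IsDevTail, List.modifyHead_add_one_eq_cons, hs]
    omega
  · simp [devTails, List.modifyHead_add_one_eq_cons, isDevTail_succ_cons]
    omega

lemma List.modifyHead_add_one_injective :
    Function.Injective (List.modifyHead (· + 1 : ℕ → ℕ)) := by
  rintro (_ | ⟨a, x⟩) (_ | ⟨b, y⟩) h <;> simp_all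

lemma ncard_devTails_succ (n : ℕ) {s : ℤ} (hs : |s + 1| ≤ 2) :
    (devTails (n + 1) s).ncard =
      (devTails n (-(s + 1))).ncard + (devTails n (s + 1) \ {[]}).ncard := by
  have hdisj : Disjoint (List.cons 1 '' devTails n (-(s + 1)))
      (List.modifyHead (· + 1) '' (devTails n (s + 1) \ {[]})) := by
    refine Set.disjoint_left.2 ?_
    rintro _ ⟨x, -, rfl⟩ ⟨y, ⟨⟨hy, -⟩, -⟩, hxy⟩
    obtain ⟨b, hb, rfl⟩ := List.modifyHead_add_one_eq_cons.1 hxy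
    obtain rfl : b = 0 := by omega
    exact (Nat.lt_irrefl 0) hy.1
  rw [devTails_succ n hs, Set.ncard_union_eq hdisj ((devTails_finite _ _).image _)
      (((devTails_finite _ _).sdiff).image _),
    Set.ncard_image_of_injective _ List.cons_injective,
    Set.ncard_image_of_injective _ List.modifyHead_add_one_injective]

lemma ncard_devTails_succ_of_ne_zero {n : ℕ} (hn : n ≠ 0) {s : ℤ} (hs : |s + 1| ≤ 2) :
    (devTails (n + 1) s).ncard = (devTails n (-(s + 1))).ncard + (devTails n (s + 1)).ncard := by
  rw [ncard_devTails_succ n hs, Set.sdiff_singleton_eq_self (nil_notMem_devTails hn _)]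

lemma ncard_devTails_zero (s : ℤ) : (devTails 0 s).ncard = if |s| ≤ 1 then 1 else 0 := by
  rw [devTails_zero]
  split_ifs <;> simp

lemma ncard_devTails_one {s : ℤ} (hs : |s + 1| ≤ 2) :
    (devTails 1 s).ncard = (devTails 0 (-(s + 1))).ncard := by
  rw [ncard_devTails_succ 0 hs, devTails_zero (s + 1)]
  split_ifs <;> simp

lemma ncard_devTails_neg_two {n : ℕ} (hn : n ≠ 0) :
    (devTails n (-2)).ncard = (devTails n 0).ncard := by
  obtain ⟨k, rfl⟩ := Nat.exists_eq_add_one_of_ne_zero hn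
  rcases eq_or_ne k 0 with rfl | hk
  · simp [ncard_devTails_one, ncard_devTails_zero]
  · rw [ncard_devTails_succ_of_ne_zero hk (by norm_num),
      ncard_devTails_succ_of_ne_zero hk (by norm_num), add_comm]
    norm_num

lemma ncard_devTails_add_two {n : ℕ} (hn : n ≠ 0) :
    (devTails (n + 2) 0).ncard = 3 * (devTails n 0).ncard := by
  have h0 := ncard_devTails_succ_of_ne_zero (Nat.succ_ne_zero n) (s := 0) (by norm_num)
  have h1 := ncard_devTails_succ_of_ne_zero hn (s := -1) (by norm_num)
  have h2 := ncard_devTails_succ_of_ne_zero hn (s := 1) (by norm_num)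
  norm_num [devTails_eq_empty_of_two_le, ncard_devTails_neg_two hn] at h0 h1 h2
  rw [h0, h1, h2]
  ring

theorem zeta_two_general (m : ℕ) : zeta m 2 = 3 ^ ((m - 1) / 2) := by
  change {α | IsDevSet m 2 α}.ncard = _
  rw [setOf_isDevSet_two]
  induction m using Nat.strong_induction_on with
  | _ m ih =>
    match m with
    | 0 => simp [ncard_devTails_zero]
    | 1 => simp [ncard_devTails_one, ncard_devTails_zero]
    | 2 => simp [ncard_devTails_succ_of_ne_zero, ncard_devTails_one, ncard_devTails_zero]
    | n + 3 =>
      rw [ncard_devTails_add_two n.succ_ne_zero, ih (n + 1) (by omega),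
        show (n + 3 - 1) / 2 = (n + 1 - 1) / 2 + 1 by omega, pow_succ, mul_comm]

/-- `ζ(m,2) = 3^⌊(m−1)/2⌋` for all `m ≥ 1`. -/
theorem zeta_two (m : ℕ) (hm : 1 ≤ m) : zeta m 2 = 3 ^ ((m - 1) / 2) :=
  zeta_two_general m
end

section
/- The counting function ζ(m,1) of 1-deviation sets satisfies the recurrence ζ(m,1) = 2·ζ(m−2,1) for all m ≥ 3. -/
/-- partial alternating sum -/
def PS (α : List ℕ) (k : ℕ) : ℤ := ∑ i ∈ Finset.range k, (-1 : ℤ) ^ i * (α.getD i 0 : ℤ)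

lemma PS_zero (α : List ℕ) : PS α 0 = 0 := by simp [PS]

lemma PS_cons (a : ℕ) (β : List ℕ) (k : ℕ) : PS (a :: β) (k + 1) = a - PS β k := by
  unfold PS
  rw [Finset.sum_range_succ']
  simp only [List.getD_cons_succ, List.getD_cons_zero, pow_zero, one_mul]
  have : ∀ i ∈ Finset.range k, (-1 : ℤ)^(i+1) * (β.getD i 0 : ℤ) = -((-1)^i * β.getD i 0) := by
    intro i _; ring
  rw [Finset.sum_congr rfl this, Finset.sum_neg_distrib]
  ring

lemma isDev_iff (m : ℕ) (α : List ℕ) :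
    IsDevSet m 1 α ↔ (∀ a ∈ α, 0 < a) ∧ α.sum = m ∧ ∀ k, |PS α k| ≤ 1 := by
  constructor
  · rintro ⟨h1, h2, _, h4⟩
    exact ⟨h1, h2, fun k => by have := h4 k; rwa [Nat.cast_one] at this⟩
  · rintro ⟨h1, h2, h4⟩
    exact ⟨h1, h2, h4 α.length, fun k => by
      have := h4 k; rwa [Nat.cast_one]⟩

lemma key1 (β : List ℕ) : (∀ k, |PS (1 :: 1 :: β) k| ≤ 1) ↔ ∀ k, |PS β k| ≤ 1 := by
  constructor
  · intro h k
    have := h (k + 2)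
    rw [PS_cons, PS_cons] at this
    simpa using this
  · intro h k
    match k with
    | 0 => simp [PS_zero]
    | 1 => rw [PS_cons, PS_zero]; norm_num
    | (k + 2) =>
      rw [PS_cons, PS_cons]
      have := h k
      have h2 : (1 : ℤ) - (1 - PS β k) = PS β k := by ring
      rw [show ((1:ℕ):ℤ) - (((1:ℕ):ℤ) - PS β k) = PS β k by push_cast; ring]
      exact this

lemma key2 (γ : List ℕ) : (∀ k, |PS (1 :: 2 :: γ) k| ≤ 1) ↔ ∀ k, |PS (1 :: γ) k| ≤ 1 := by
  have e : ∀ k, PS (1 :: 2 :: γ) (k + 2) = PS γ k - 1 := by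
    intro k; rw [PS_cons, PS_cons]; push_cast; ring
  have e' : ∀ k, PS (1 :: γ) (k + 1) = 1 - PS γ k := by
    intro k; rw [PS_cons]; push_cast; ring
  constructor
  · intro h k
    match k with
    | 0 => simp [PS_zero]
    | (k + 1) =>
      rw [e']
      have := h (k + 2)
      rw [e] at this
      rwa [abs_sub_comm] at this
  · intro h k
    match k with
    | 0 => simp [PS_zero]
    | 1 => rw [PS_cons, PS_zero]; norm_num
    | (k + 2) =>
      rw [e]
      have := h (k + 1)
      rw [e'] at this
      rwa [abs_sub_comm] at this

lemma devA (n : ℕ) (β : List ℕ) : IsDevSet (n + 2) 1 (1 :: 1 :: β) ↔ IsDevSet n 1 β := by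
  rw [isDev_iff, isDev_iff]
  constructor
  · rintro ⟨h1, h2, h3⟩
    refine ⟨fun a ha => h1 a (by simp [ha]), ?_, (key1 β).1 h3⟩
    simp at h2; omega
  · rintro ⟨h1, h2, h3⟩
    refine ⟨?_, ?_, (key1 β).2 h3⟩
    · intro a ha
      rcases List.mem_cons.1 ha with rfl | ha
      · norm_num
      rcases List.mem_cons.1 ha with rfl | ha
      · norm_num
      exact h1 a ha
    · simp; omega

lemma devB (n : ℕ) (γ : List ℕ) : IsDevSet (n + 2) 1 (1 :: 2 :: γ) ↔ IsDevSet n 1 (1 :: γ) := by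
  rw [isDev_iff, isDev_iff]
  constructor
  · rintro ⟨h1, h2, h3⟩
    refine ⟨?_, ?_, (key2 γ).1 h3⟩
    · intro a ha
      rcases List.mem_cons.1 ha with rfl | ha
      · norm_num
      exact h1 a (List.mem_cons_of_mem _ (List.mem_cons_of_mem _ ha))
    · simp at h2 ⊢; omega
  · rintro ⟨h1, h2, h3⟩
    refine ⟨?_, ?_, (key2 γ).2 h3⟩
    · intro a ha
      rcases List.mem_cons.1 ha with rfl | ha
      · norm_num
      rcases List.mem_cons.1 ha with rfl | ha
      · norm_num
      exact h1 a (List.mem_cons_of_mem _ ha)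
    · simp at h2 ⊢; omega

lemma head_one {n : ℕ} {α : List ℕ} (h : IsDevSet n 1 α) (hn : 1 ≤ n) :
    ∃ γ, α = 1 :: γ := by
  rw [isDev_iff] at h
  obtain ⟨h1, h2, h3⟩ := h
  match α with
  | [] => simp at h2; omega
  | a :: γ =>
    have hp : 0 < a := h1 a (by simp)
    have := h3 1
    rw [PS_cons, PS_zero] at this
    have : |(a : ℤ)| ≤ 1 := by simpa using this
    have : a = 1 := by rw [abs_of_nonneg (by positivity)] at this; exact_mod_cast by omega
    exact ⟨γ, by rw [this]⟩

lemma second_elt {n : ℕ} {γ : List ℕ} (h : IsDevSet n 1 (1 :: γ)) (hn : 3 ≤ n) :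
    ∃ δ, γ = 1 :: δ ∨ γ = 2 :: δ := by
  rw [isDev_iff] at h
  obtain ⟨h1, h2, h3⟩ := h
  match γ with
  | [] => simp at h2; omega
  | b :: δ =>
    have hp : 0 < b := h1 b (by simp)
    have := h3 2
    rw [PS_cons, PS_cons, PS_zero] at this
    have hb : b ≤ 2 := by
      rw [abs_le] at this
      push_cast at this
      omega
    refine ⟨δ, ?_⟩
    interval_cases b
    · exact Or.inl rfl
    · exact Or.inr rfl

/-- The recurrence `ζ(m,1) = 2·ζ(m−2,1)` for all `m ≥ 3`. -/
theorem zeta_one_rec (m : ℕ) (hm : 3 ≤ m) : zeta m 1 = 2 * zeta (m - 2) 1 := by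
  obtain ⟨n, rfl, hn⟩ : ∃ n, m = n + 2 ∧ 1 ≤ n := ⟨m - 2, by omega, by omega⟩
  set Sn := {α : List ℕ // IsDevSet n 1 α}
  set Sm := {α : List ℕ // IsDevSet (n + 2) 1 α}
  have tail_eq : ∀ β : Sn, ∃ γ, β.val = 1 :: γ := fun β => head_one β.2 hn
  let f : Bool × Sn → Sm := fun x =>
    match x.1 with
    | false => ⟨1 :: 1 :: x.2.val, (devA n x.2.val).2 x.2.2⟩
    | true => ⟨1 :: 2 :: x.2.val.tail, by
        obtain ⟨γ, hγ⟩ := tail_eq x.2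
        rw [hγ]
        exact (devB n γ).2 (hγ ▸ x.2.2)⟩
  have hbij : Function.Bijective f := by
    constructor
    · rintro ⟨b, β⟩ ⟨b', β'⟩ hfe
      have hfe' := congrArg Subtype.val hfe
      match b, b' with
      | false, false =>
        simp only [f] at hfe'
        simp only [List.cons.injEq] at hfe'
        exact Prod.ext rfl (Subtype.ext hfe'.2.2)
      | false, true =>
        simp only [f, List.cons.injEq] at hfe'
        obtain ⟨-, h12, -⟩ := hfe'; omega
      | true, false =>
        simp only [f, List.cons.injEq] at hfe'
        obtain ⟨-, h12, -⟩ := hfe'; omega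
      | true, true =>
        simp only [f, List.cons.injEq] at hfe'
        obtain ⟨γ, hγ⟩ := tail_eq β
        obtain ⟨γ', hγ'⟩ := tail_eq β'
        refine Prod.ext rfl (Subtype.ext ?_)
        rw [hγ, hγ'] at hfe' ⊢
        simp only [List.tail_cons] at hfe'
        rw [hfe'.2.2]
    · rintro ⟨α, hα⟩
      obtain ⟨γ, rfl⟩ := head_one hα (by omega)
      obtain ⟨δ, hδ | hδ⟩ := second_elt hα (by omega)
      · subst hδ
        exact ⟨(false, ⟨δ, (devA n δ).1 hα⟩), rfl⟩
      · subst hδ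
        refine ⟨(true, ⟨1 :: δ, (devB n δ).1 hα⟩), ?_⟩
        rfl
  have hcard : Nat.card (Bool × Sn) = Nat.card Sm := Nat.card_eq_of_bijective f hbij
  rw [Nat.card_prod] at hcard
  simp only [Nat.card_eq_fintype_card, Fintype.card_bool] at hcard
  show Nat.card Sm = 2 * Nat.card Sn
  omega
end

section
/- The counting function ζ(m,5) of 5-deviation sets satisfies ζ(m,5) = ((2+√3)^⌊(m+1)/2⌋ + (2−√3)^⌊(m+1)/2⌋ + 2^⌊(m+1)/2⌋)/6 for all m ≥ 1. -/
open Finset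

lemma List.modifyHead_eq_cons_iff {α : Type*} {f : α → α} {β l : List α} {a : α} :
    β.modifyHead f = a :: l ↔ ∃ b, β = b :: l ∧ f b = a := by
  cases β <;> simp [and_comm, eq_comm]

lemma List.modifyHead_injective {α : Type*} {f : α → α} (hf : Function.Injective f) :
    Function.Injective (List.modifyHead f) := by
  rintro (_ | ⟨a, l⟩) (_ | ⟨b, l'⟩) h <;> simp_all [hf.eq_iff]

def partialAltSum (α : List ℕ) (k : ℕ) : ℤ := ∑ i ∈ range k, (-1 : ℤ) ^ i * (α.getD i 0 : ℤ)

@[simp]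
lemma partialAltSum_zero (α : List ℕ) : partialAltSum α 0 = 0 := rfl

lemma partialAltSum_cons_succ (a : ℕ) (l : List ℕ) (k : ℕ) :
    partialAltSum (a :: l) (k + 1) = a - partialAltSum l k := by
  simp only [partialAltSum, sum_range_succ', List.getD_cons_succ, List.getD_cons_zero, pow_succ,
    pow_zero, mul_neg_one, neg_mul, sum_neg_distrib, one_mul]
  ring

lemma partialAltSum_of_length_le {α : List ℕ} {k : ℕ} (h : α.length ≤ k) :
    partialAltSum α k = partialAltSum α α.length := by
  obtain ⟨j, rfl⟩ := Nat.exists_eq_add_of_le h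
  simp [partialAltSum, sum_range_add]

lemma forall_abs_partialAltSum_le_iff (α : List ℕ) (δ : ℕ) :
    (∀ k, |partialAltSum α k| ≤ δ) ↔ ∀ k < α.length, |partialAltSum α (k + 1)| ≤ δ := by
  refine ⟨fun h k _ => h _, fun h k => ?_⟩
  rcases k with _ | k
  · simp
  rcases lt_or_ge k α.length with hk | hk
  · exact h k hk
  rw [partialAltSum_of_length_le (Nat.le_succ_of_le hk)]
  rcases α with _ | ⟨a, l⟩
  · simp
  · exact h l.length (by simp)

/-- `s` is the alternating sum of the parts read so far, times `(-1) ^ k` after `k` parts, so that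
every part increases it. -/
def IsDevSetFrom (δ : ℕ) : ℤ → List ℕ → Prop
  | s, [] => |s| ≤ 1
  | s, a :: l => 0 < a ∧ |s + a| ≤ δ ∧ IsDevSetFrom δ (-(s + a)) l

section

variable {δ : ℕ}

@[simp]
lemma isDevSetFrom_nil (s : ℤ) : IsDevSetFrom δ s [] ↔ |s| ≤ 1 := Iff.rfl

@[simp]
lemma isDevSetFrom_cons (s : ℤ) (a : ℕ) (l : List ℕ) :
    IsDevSetFrom δ s (a :: l) ↔ 0 < a ∧ |s + a| ≤ δ ∧ IsDevSetFrom δ (-(s + a)) l :=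
  Iff.rfl

lemma isDevSetFrom_succ_cons {b : ℕ} (hb : 0 < b) (s : ℤ) (l : List ℕ) :
    IsDevSetFrom δ s ((b + 1) :: l) ↔ IsDevSetFrom δ (s + 1) (b :: l) := by
  simp only [isDevSetFrom_cons, hb, Nat.succ_pos, true_and, Nat.cast_succ, add_comm (b : ℤ) 1,
    add_assoc]

lemma isDevSetFrom_iff (s : ℤ) (α : List ℕ) :
    IsDevSetFrom δ s α ↔ (∀ a ∈ α, 0 < a) ∧ |s + partialAltSum α α.length| ≤ 1 ∧
      ∀ k < α.length, |s + partialAltSum α (k + 1)| ≤ δ := by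
  induction α generalizing s with
  | nil => simp
  | cons a l ih =>
    have reflect : ∀ x : ℤ, |-(s + a) + x| = |s + (a - x)| := fun x => by
      rw [← abs_neg]; ring_nf
    simp only [isDevSetFrom_cons, ih, reflect, List.forall_mem_cons, List.length_cons,
      partialAltSum_cons_succ, Nat.forall_lt_succ_left, partialAltSum_zero, sub_zero]
    tauto

theorem isDevSet_iff_s8 (m : ℕ) (α : List ℕ) : IsDevSet m δ α ↔ α.sum = m ∧ IsDevSetFrom δ 0 α := by
  simp only [isDevSetFrom_iff, zero_add, ← forall_abs_partialAltSum_le_iff]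
  unfold IsDevSet partialAltSum
  tauto

/-- `List.modifyHead (· + 1)` adds a unit to the first part; the guard `m = 0` keeps it away from
the empty list, which it would leave unchanged. -/
def devFinset (δ : ℕ) : ℕ → ℤ → Finset (List ℕ)
  | 0, s => if |s| ≤ 1 then {[]} else ∅
  | m + 1, s =>
    (if |s + 1| ≤ δ then (devFinset δ m (-(s + 1))).image (List.cons 1) else ∅) ∪
      (if m = 0 then ∅ else (devFinset δ m (s + 1)).image (List.modifyHead (· + 1)))

lemma mem_devFinset_succ {m : ℕ} {s : ℤ} {α : List ℕ} :
    α ∈ devFinset δ (m + 1) s ↔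
      (|s + 1| ≤ δ ∧ ∃ l ∈ devFinset δ m (-(s + 1)), 1 :: l = α) ∨
        (m ≠ 0 ∧ ∃ β ∈ devFinset δ m (s + 1), β.modifyHead (· + 1) = α) := by
  simp only [devFinset, mem_union]
  split_ifs <;> simp [*]

theorem mem_devFinset {m : ℕ} {s : ℤ} {α : List ℕ} :
    α ∈ devFinset δ m s ↔ α.sum = m ∧ IsDevSetFrom δ s α := by
  induction m generalizing s α with
  | zero =>
    rcases α with _ | ⟨a, l⟩
    · simp [devFinset, mem_ite]
    · refine iff_of_false (by unfold devFinset; split_ifs <;> simp) fun ⟨hsum, ha, _⟩ => ?_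
      simp only [List.sum_cons, Nat.add_eq_zero_iff] at hsum
      omega
  | succ m ih =>
    rw [mem_devFinset_succ]
    rcases α with _ | ⟨_ | _ | b, l⟩
    · simp +contextual [ih, @eq_comm ℕ 0]
    · simp [List.modifyHead_eq_cons_iff]
    · simp [ih, List.modifyHead_eq_cons_iff, add_comm 1, and_left_comm]
    · rw [isDevSetFrom_succ_cons b.succ_pos]
      simp only [ih, List.modifyHead_eq_cons_iff, List.cons.injEq, List.sum_cons, Nat.right_eq_add,
        Nat.add_eq_zero_iff, one_ne_zero, and_false, false_and, exists_const, false_or,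
        Nat.add_right_cancel_iff, exists_eq_right]
      exact ⟨fun ⟨_, h, hd⟩ => ⟨by omega, hd⟩, fun ⟨h, hd⟩ => ⟨by omega, by omega, hd⟩⟩

theorem card_devFinset_succ (m : ℕ) (s : ℤ) :
    #(devFinset δ (m + 1) s) =
      (if |s + 1| ≤ δ then #(devFinset δ m (-(s + 1))) else 0) +
        if m = 0 then 0 else #(devFinset δ m (s + 1)) := by
  have disjoint : Disjoint ((devFinset δ m (-(s + 1))).image (List.cons 1))
      ((devFinset δ m (s + 1)).image (List.modifyHead (· + 1))) := by
    simp only [disjoint_left, mem_image]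
    rintro _ ⟨l, -, rfl⟩ ⟨β, hβ, h⟩
    obtain ⟨b, rfl, hb⟩ := List.modifyHead_eq_cons_iff.1 h
    simp only [mem_devFinset, List.sum_cons, isDevSetFrom_cons] at hβ
    omega
  rw [devFinset, card_union_of_disjoint
    (by split_ifs <;> simp only [disjoint, disjoint_empty_left, disjoint_empty_right])]
  split_ifs <;> simp [card_image_of_injective _ List.cons_injective,
    card_image_of_injective _ (List.modifyHead_injective (add_left_injective 1))]

theorem devFinset_succ_eq_empty {m : ℕ} {s : ℤ} (hs : δ ≤ s) : devFinset δ (m + 1) s = ∅ := by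
  refine eq_empty_of_forall_notMem fun α hα => ?_
  rcases α with _ | ⟨a, l⟩
  · simp [mem_devFinset] at hα
  · simp only [mem_devFinset, List.sum_cons, isDevSetFrom_cons, abs_le] at hα
    omega

theorem zeta_eq_card_devFinset (m : ℕ) : zeta m δ = #(devFinset δ m 0) := by
  rw [zeta, ← Nat.card_eq_finsetCard]
  exact Nat.card_congr <| Equiv.subtypeEquivRight fun α => by rw [isDevSet_iff_s8, mem_devFinset]

end

theorem card_devFinset_five_recurrence {m : ℕ} (hm : 1 ≤ m) {s : ℤ} (hs : -5 ≤ s) :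
    #(devFinset 5 (m + 6) s) + 9 * #(devFinset 5 (m + 2) s) =
      6 * #(devFinset 5 (m + 4) s) + 2 * #(devFinset 5 m s) := by
  induction m, hm using Nat.le_induction generalizing s with
  | base =>
    -- states `s ≥ 5` carry no deviation set, so only `-5 ≤ s ≤ 4` remain to be checked
    rcases lt_or_ge s 5 with hs5 | hs5
    · interval_cases s <;> decide
    · simp [devFinset_succ_eq_empty (δ := 5) hs5]
  | succ m hm ih =>
    have step (n : ℕ) (hn : n ≠ 0) : #(devFinset 5 (n + 1) s) =
        (if |s + 1| ≤ 5 then #(devFinset 5 n (-(s + 1))) else 0) + #(devFinset 5 n (s + 1)) := by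
      rw [card_devFinset_succ, if_neg hn, Nat.cast_ofNat]
    rw [show m + 1 + 6 = m + 6 + 1 by rfl, show m + 1 + 4 = m + 4 + 1 by rfl,
      show m + 1 + 2 = m + 2 + 1 by rfl, step _ (by omega), step _ (by omega),
      step _ (by omega), step _ (by omega)]
    have ih₁ := ih (s := s + 1) (by omega)
    split_ifs with hs'
    · have ih₂ := ih (s := -(s + 1)) (by rw [abs_le] at hs'; omega)
      omega
    · omega

def zetaFiveRecurrence : LinearRecurrence ℝ := ⟨3, ![2, -9, 6]⟩

lemma isSolution_zetaFiveRecurrence_iff (u : ℕ → ℝ) :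
    zetaFiveRecurrence.IsSolution u ↔ ∀ n, u (n + 3) + 9 * u (n + 1) = 6 * u (n + 2) + 2 * u n := by
  refine forall_congr' fun n => ?_
  change u (n + 3) = ∑ i : Fin 3, ![(2 : ℝ), -9, 6] i * u (n + i) ↔ _
  simp only [Fin.sum_univ_three, Matrix.cons_val_zero, Matrix.cons_val_one, Matrix.cons_val_two,
    Matrix.head_cons, Matrix.tail_cons, Fin.val_zero, Fin.val_one, Fin.val_two, add_zero]
  constructor <;> intro h <;> linarith

noncomputable def zetaFiveClosedForm (n : ℕ) : ℝ := ((2 + √3) ^ n + (2 - √3) ^ n + 2 ^ n) / 6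

lemma isSolution_zetaFiveClosedForm :
    zetaFiveRecurrence.IsSolution fun n => zetaFiveClosedForm (n + 1) := by
  have geom {q : ℝ} (hq : q ^ 3 + 9 * q = 6 * q ^ 2 + 2) (n : ℕ) :
      q ^ (n + 4) + 9 * q ^ (n + 2) = 6 * q ^ (n + 3) + 2 * q ^ (n + 1) := by
    linear_combination q ^ (n + 1) * hq
  have h₃ : √3 ^ 2 = 3 := Real.sq_sqrt (by norm_num)
  rw [isSolution_zetaFiveRecurrence_iff]
  intro n
  have h₁ := geom (q := 2 + √3) (by linear_combination √3 * h₃) n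
  have h₂ := geom (q := 2 - √3) (by linear_combination -√3 * h₃) n
  have h₀ := geom (q := 2) (by norm_num) n
  simp only [zetaFiveClosedForm]
  linear_combination (h₁ + h₂ + h₀) / 6

lemma zetaFiveClosedForm_one_two_three :
    zetaFiveClosedForm 1 = 1 ∧ zetaFiveClosedForm 2 = 3 ∧ zetaFiveClosedForm 3 = 10 := by
  have h₃ : √3 ^ 2 = 3 := Real.sq_sqrt (by norm_num)
  refine ⟨?_, ?_, ?_⟩ <;> rw [zetaFiveClosedForm]
  · ring
  · linear_combination (1 / 3 : ℝ) * h₃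
  · linear_combination (2 : ℝ) * h₃

lemma isSolution_card_devFinset_five {r : ℕ} (hr : 1 ≤ r) :
    zetaFiveRecurrence.IsSolution fun n => (#(devFinset 5 (r + 2 * n) 0) : ℝ) := by
  rw [isSolution_zetaFiveRecurrence_iff]
  intro n
  have := card_devFinset_five_recurrence (m := r + 2 * n) (by omega) (s := 0) (by norm_num)
  rw [show r + 2 * (n + 3) = r + 2 * n + 6 by ring, show r + 2 * (n + 2) = r + 2 * n + 4 by ring,
    show r + 2 * (n + 1) = r + 2 * n + 2 by ring]
  exact_mod_cast this

lemma card_devFinset_five_eq {r : ℕ} (hr₁ : 1 ≤ r) (hr₂ : r ≤ 2) (n : ℕ) :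
    (#(devFinset 5 (r + 2 * n) 0) : ℝ) = zetaFiveClosedForm (n + 1) := by
  refine congrFun ((zetaFiveRecurrence.eq_iff_eqOn_range_order _ _
    (isSolution_card_devFinset_five hr₁) isSolution_zetaFiveClosedForm).2 fun k hk => ?_) n
  simp only [zetaFiveRecurrence, coe_range, Set.mem_Iio] at hk
  obtain ⟨c₁, c₂, c₃⟩ := zetaFiveClosedForm_one_two_three
  interval_cases r <;> interval_cases k <;> norm_num [c₁, c₂, c₃] <;> norm_cast

/-- `ζ(m,5) = ((2+√3)^⌊(m+1)/2⌋ + (2−√3)^⌊(m+1)/2⌋ + 2^⌊(m+1)/2⌋)/6` for all `m ≥ 1`. -/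
theorem zeta_five (m : ℕ) (hm : 1 ≤ m) :
    (zeta m 5 : ℝ) =
      ((2 + Real.sqrt 3) ^ ((m + 1) / 2) + (2 - Real.sqrt 3) ^ ((m + 1) / 2) +
        2 ^ ((m + 1) / 2)) / 6 := by
  obtain ⟨r, n, hr₁, hr₂, rfl⟩ : ∃ r n, 1 ≤ r ∧ r ≤ 2 ∧ m = r + 2 * n :=
    ⟨2 - m % 2, (m - 1) / 2, by omega, by omega, by omega⟩
  rw [zeta_eq_card_devFinset, card_devFinset_five_eq hr₁ hr₂,
    show (r + 2 * n + 1) / 2 = n + 1 by omega, zetaFiveClosedForm]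
end

section
/- Let X = {x_1 > x_2 > ⋯ > x_m ≥ 0} be real numbers and α = (α_1,…,α_r) a δ-deviation set of size m with partial sums c_0 = 0, c_k = α_1 + ⋯ + α_k. Then the alternating block sum Δ(X,α) = |Σ_{k≥0} (−1)^k Σ_{c_k < i ≤ c_{k+1}} x_i| satisfies Δ(X,α) ≤ δ·x_1. -/
open Finset

theorem sum_range_mul_eq_sum_mul_add_sum {R : Type*} [CommRing R] (f x : ℕ → R) (n : ℕ) :
    ∑ i ∈ range n, f i * x i =
      (∑ i ∈ range n, f i) * x n +
        ∑ i ∈ range n, (∑ j ∈ range (i + 1), f j) * (x i - x (i + 1)) := by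
  induction n with
  | zero => simp
  | succ n ih => rw [sum_range_succ, ih, sum_range_succ, sum_range_succ _ n, sum_range_succ]; ring

/-- Abel's inequality. -/
theorem abs_sum_range_mul_le {f x : ℕ → ℝ} {n : ℕ} {B : ℝ}
    (hf : ∀ k ≤ n, |∑ i ∈ range k, f i| ≤ B) (hx : AntitoneOn x (Set.Iic n)) (hxn : 0 ≤ x n) :
    |∑ i ∈ range n, f i * x i| ≤ B * x 0 := by
  have hstep : ∀ i ∈ range n, 0 ≤ x i - x (i + 1) := fun i hi => by
    rw [mem_range] at hi
    exact sub_nonneg.2 (hx (Set.mem_Iic.2 (by omega)) (Set.mem_Iic.2 (by omega)) (by omega))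
  rw [sum_range_mul_eq_sum_mul_add_sum]
  calc _ ≤ |(∑ i ∈ range n, f i) * x n| +
          ∑ i ∈ range n, |(∑ j ∈ range (i + 1), f j) * (x i - x (i + 1))| :=
        (abs_add_le _ _).trans (add_le_add le_rfl (abs_sum_le_sum_abs _ _))
    _ ≤ B * x n + ∑ i ∈ range n, B * (x i - x (i + 1)) := by
        gcongr with i hi
        · rw [abs_mul, abs_of_nonneg hxn]
          exact mul_le_mul_of_nonneg_right (hf n le_rfl) hxn
        · rw [abs_mul, abs_of_nonneg (hstep i hi)]
          exact mul_le_mul_of_nonneg_right (hf (i + 1) (by simpa using hi)) (hstep i hi)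
    _ = B * x 0 := by rw [← mul_sum, sum_range_sub']; ring

/-- The sign of the block of `α` that contains position `i` (`0` past the last block). -/
def blockSign : List ℕ → ℕ → ℤ
  | [], _ => 0
  | a :: α, i => if i < a then 1 else -blockSign α (i - a)

def altPartialSum (α : List ℕ) (k : ℕ) : ℤ :=
  ∑ i ∈ range k, (-1 : ℤ) ^ i * (α.getD i 0 : ℤ)

section blockSign

variable (a : ℕ) (α : List ℕ)

theorem altPartialSum_cons_succ (k : ℕ) :
    altPartialSum (a :: α) (k + 1) = a - altPartialSum α k := by
  simp [altPartialSum, sum_range_succ', pow_succ, sum_neg_distrib]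
  ring

theorem blockSign_cons_of_lt {i : ℕ} (hi : i < a) : blockSign (a :: α) i = 1 := by
  rw [blockSign, if_pos hi]

theorem blockSign_cons_add (i : ℕ) : blockSign (a :: α) (a + i) = -blockSign α i := by
  rw [blockSign, if_neg (by omega), Nat.add_sub_cancel_left]

theorem sum_range_blockSign_cons_of_le {n : ℕ} (hn : n ≤ a) :
    ∑ i ∈ range n, blockSign (a :: α) i = n := by
  rw [sum_congr rfl fun i hi => blockSign_cons_of_lt a α ((mem_range.1 hi).trans_le hn)]
  simp

theorem sum_range_blockSign_cons_add (n : ℕ) :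
    ∑ i ∈ range (a + n), blockSign (a :: α) i = a - ∑ i ∈ range n, blockSign α i := by
  rw [sum_range_add, sum_range_blockSign_cons_of_le a α le_rfl, sub_eq_add_neg, ← sum_neg_distrib]
  simp only [blockSign_cons_add]

/-- The partial sums of the block signs interpolate linearly between consecutive partial
alternating sums. -/
theorem sum_range_blockSign_mem_Icc {lo hi : ℤ} (h : ∀ k, altPartialSum α k ∈ Set.Icc lo hi)
    {n : ℕ} (hn : n ≤ α.sum) : ∑ i ∈ range n, blockSign α i ∈ Set.Icc lo hi := by
  induction α generalizing lo hi n with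
  | nil =>
    obtain rfl : n = 0 := by simpa using hn
    simpa [altPartialSum] using h 0
  | cons b α ih =>
    have h0 := h 0
    have h1 := h (0 + 1)
    rw [altPartialSum_cons_succ] at h1
    simp only [altPartialSum, range_zero, sum_empty, sub_zero] at h0 h1
    simp only [List.sum_cons] at hn
    rcases le_or_gt n b with hnb | hbn
    · rw [sum_range_blockSign_cons_of_le b α hnb]
      simp only [Set.mem_Icc] at h0 h1 ⊢
      omega
    · obtain ⟨n, rfl⟩ := Nat.exists_eq_add_of_le hbn.le
      have := ih (lo := b - hi) (hi := b - lo)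
        (fun k => by
          have := h (k + 1)
          rw [altPartialSum_cons_succ, Set.mem_Icc] at this
          rw [Set.mem_Icc]
          omega)
        (n := n) (by omega)
      rw [sum_range_blockSign_cons_add]
      simp only [Set.mem_Icc] at this ⊢
      omega

theorem sum_alternating_blocks_eq_sum_blockSign_mul {R : Type*} [CommRing R] (x : ℕ → R) :
    ∑ k ∈ range α.length, (-1 : R) ^ k * ∑ i ∈ Ico ((α.take k).sum) ((α.take (k + 1)).sum), x i =
      ∑ i ∈ range α.sum, (blockSign α i : R) * x i := by
  induction α generalizing x with
  | nil => simp
  | cons b α ih =>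
    have hshift : ∀ k, ∑ i ∈ Ico (b + (α.take k).sum) (b + (α.take (k + 1)).sum), x i =
        ∑ i ∈ Ico ((α.take k).sum) ((α.take (k + 1)).sum), x (b + i) := fun k => by
      rw [sum_Ico_add, add_comm b, add_comm b]
    have hhead : ∑ i ∈ range b, (blockSign (b :: α) i : R) * x i = ∑ i ∈ Ico 0 b, x i :=
      sum_congr (range_eq_Ico b) fun i hi => by
        rw [blockSign_cons_of_lt b α (mem_Ico.1 hi).2, Int.cast_one, one_mul]
    rw [List.length_cons, List.sum_cons, sum_range_succ', sum_range_add, hhead]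
    simp only [List.take_succ_cons, List.sum_cons, List.take_zero, List.sum_nil, hshift,
      blockSign_cons_add, pow_succ, mul_neg_one, neg_mul, sum_neg_distrib, ih, Int.cast_neg,
      pow_zero, one_mul, add_zero]
    exact add_comm _ _

end blockSign

theorem AntitoneOn.ite_lt_Iic {β : Type*} [Preorder β] [Zero β] {x : ℕ → β} {m : ℕ}
    (hx : AntitoneOn x (Set.Iio m)) (hnonneg : ∀ i < m, 0 ≤ x i) :
    AntitoneOn (fun i => if i < m then x i else 0) (Set.Iic m) := fun i _ j _ hij => by
  dsimp only
  split_ifs with hjm him him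
  · exact hx (Set.mem_Iio.2 him) (Set.mem_Iio.2 hjm) hij
  · omega
  · exact hnonneg i him
  · exact le_rfl

theorem alternating_block_sum_le_general (m δ : ℕ) (hm : 1 ≤ m)
    (x : ℕ → ℝ) (hnonneg : ∀ i, i < m → 0 ≤ x i)
    (hdec : ∀ i j, i < j → j < m → x j < x i)
    (α : List ℕ) (hα : IsDevSet m δ α) :
    |∑ k ∈ Finset.range α.length, (-1 : ℝ) ^ k *
        ∑ i ∈ Finset.Ico ((α.take k).sum) ((α.take (k + 1)).sum), x i| ≤ δ * x 0 := by
  obtain ⟨-, hsum, -, hpart⟩ := hα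
  -- Extended by `0` past `m`, the weights are antitone and nonnegative up to and including `m`.
  set y : ℕ → ℝ := fun i => if i < m then x i else 0 with hy
  have hy_anti : AntitoneOn y (Set.Iic m) :=
    AntitoneOn.ite_lt_Iic (StrictAntiOn.antitoneOn fun i _ j hj hij => hdec i j hij hj) hnonneg
  have hsigns : ∀ n ≤ m, |∑ i ∈ range n, (blockSign α i : ℝ)| ≤ δ := fun n hn => by
    have := sum_range_blockSign_mem_Icc α (lo := -δ) (hi := δ) (fun k => abs_le.1 (hpart k))
      (hsum ▸ hn)
    exact_mod_cast abs_le.2 this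
  calc _ = |∑ i ∈ range m, (blockSign α i : ℝ) * y i| := by
        rw [sum_alternating_blocks_eq_sum_blockSign_mul, hsum]
        congr 1
        exact sum_congr rfl fun i hi => by simp only [hy, if_pos (mem_range.1 hi)]
    _ ≤ δ * y 0 := abs_sum_range_mul_le hsigns hy_anti (by simp [hy])
    _ = δ * x 0 := by simp only [hy, if_pos (Nat.lt_of_succ_le hm)]

/-- For strictly decreasing nonnegative reals `x 0 > x 1 > ⋯ > x (m-1) ≥ 0` and a
`δ`-deviation set `α` of size `m`, the alternating block sum `Δ(X,α)` is at most `δ·x 0`. -/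
theorem alternating_block_sum_le (m δ : ℕ) (hm : 1 ≤ m) (hδ : 1 ≤ δ)
    (x : ℕ → ℝ) (hnonneg : ∀ i, i < m → 0 ≤ x i)
    (hdec : ∀ i j, i < j → j < m → x j < x i)
    (α : List ℕ) (hα : IsDevSet m δ α) :
    |∑ k ∈ Finset.range α.length, (-1 : ℝ) ^ k *
        ∑ i ∈ Finset.Ico ((α.take k).sum) ((α.take (k + 1)).sum), x i| ≤ δ * x 0 :=
  alternating_block_sum_le_general m δ hm x hnonneg hdec α hα
end

section
/- All roots of the polynomial p_δ(x), defined by p_1(x)=1−2x, p_2(x)=1−3x, p_δ(x)=p_{δ−1}(x)−x·p_{δ−2}(x), are real and strictly greater than 1/4. -/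
/-!
Write `1 - 4z = w²` and `u = (1 + w)/2`, `v = (1 - w)/2`, so that `u + v = 1`, `uv = z` and the
recursion gives `p_δ(z) = u^(δ+1) + v^(δ+1)`. At a root `|u| = |v|`, i.e. `|1 + w| = |1 - w|`, so `w`
is purely imaginary, and `w ≠ 0`; hence `z = (1 + (Im w)²)/4 > 1/4`.
-/

open Polynomial

theorem eval_mul_eq_pow_add_pow {R : Type*} [CommRing R] (p : ℕ → R[X])
    (h1 : p 1 = 1 - 2 * X) (h2 : p 2 = 1 - 3 * X)
    (hrec : ∀ δ, 3 ≤ δ → p δ = p (δ - 1) - X * p (δ - 2))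
    {u v : R} (huv : u + v = 1) :
    ∀ n, 1 ≤ n → (p n).eval (u * v) = u ^ (n + 1) + v ^ (n + 1)
  | 1, _ => by
    simp only [h1, eval_sub, eval_one, eval_mul, eval_ofNat, eval_X]
    linear_combination (-u - v - 1) * huv
  | 2, _ => by
    simp only [h2, eval_sub, eval_one, eval_mul, eval_ofNat, eval_X]
    linear_combination (-u ^ 2 - v ^ 2 + u * v - u - v - 1) * huv
  | n + 3, _ => by
    rw [hrec (n + 3) (by omega), eval_sub, eval_mul, eval_X, show n + 3 - 1 = n + 2 by omega,
      show n + 3 - 2 = n + 1 by omega,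
      eval_mul_eq_pow_add_pow p h1 h2 hrec huv (n + 2) (by omega),
      eval_mul_eq_pow_add_pow p h1 h2 hrec huv (n + 1) (by omega)]
    linear_combination (-u ^ (n + 3) - v ^ (n + 3)) * huv

theorem norm_eq_norm_of_pow_add_pow_eq_zero {K : Type*} [NormedDivisionRing K] {a b : K} {m : ℕ}
    (hm : m ≠ 0) (h : a ^ m + b ^ m = 0) : ‖a‖ = ‖b‖ := by
  rw [← pow_left_inj₀ (norm_nonneg a) (norm_nonneg b) hm, ← norm_pow, ← norm_pow,
    eq_neg_of_add_eq_zero_left h, norm_neg]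

theorem Complex.re_eq_zero_of_norm_one_add_eq_norm_one_sub {w : ℂ} (h : ‖1 + w‖ = ‖1 - w‖) :
    w.re = 0 := by
  have hsq : normSq (1 + w) = normSq (1 - w) := by
    rw [← Complex.sq_norm, ← Complex.sq_norm, h]
  simp only [normSq_apply, add_re, add_im, sub_re, sub_im, one_re, one_im] at hsq
  linarith

theorem Complex.re_eq_zero_of_pow_add_pow_eq_zero {w : ℂ} {m : ℕ} (hm : m ≠ 0)
    (h : ((1 + w) / 2) ^ m + ((1 - w) / 2) ^ m = 0) : w.re = 0 ∧ w ≠ 0 := by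
  refine ⟨re_eq_zero_of_norm_one_add_eq_norm_one_sub ?_, ?_⟩
  · simpa [norm_div] using norm_eq_norm_of_pow_add_pow_eq_zero hm h
  · rintro rfl
    norm_num at h

/-- All (complex) roots of `p_δ` are real and strictly greater than `1/4`. -/
theorem char_poly_roots_real_gt (p : ℕ → Polynomial ℂ)
    (h1 : p 1 = 1 - 2 * X) (h2 : p 2 = 1 - 3 * X)
    (hrec : ∀ δ, 3 ≤ δ → p δ = p (δ - 1) - X * p (δ - 2))
    (δ : ℕ) (hδ : 1 ≤ δ) :
    ∀ z : ℂ, (p δ).eval z = 0 → ∃ r : ℝ, z = (r : ℂ) ∧ 1 / 4 < r := by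
  intro z hz
  obtain ⟨w, hw⟩ := IsAlgClosed.exists_pow_nat_eq (1 - 4 * z) two_pos
  have huv : (1 + w) / 2 + (1 - w) / 2 = 1 := by ring
  have hz_eq : (1 + w) / 2 * ((1 - w) / 2) = z := by linear_combination (-1 / 4 : ℂ) * hw
  rw [← hz_eq, eval_mul_eq_pow_add_pow p h1 h2 hrec huv δ hδ] at hz
  obtain ⟨hre, hw0⟩ := Complex.re_eq_zero_of_pow_add_pow_eq_zero δ.succ_ne_zero hz
  have him : w.im ≠ 0 := fun him => hw0 (Complex.ext hre him)
  have hw_eq : w = w.im * Complex.I := Complex.ext (by simp [hre]) (by simp)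
  rw [hw_eq, mul_pow, Complex.I_sq] at hw
  have him_sq : 0 < w.im ^ 2 := by positivity
  refine ⟨(1 + w.im ^ 2) / 4, ?_, by linarith⟩
  push_cast
  linear_combination (1 / 4 : ℂ) * hw
end

section
/- For all integers r ≥ 1 and t ≥ 0: Σ_k C(r,2k)C(k,t) = Σ_k C(r,2k−1)C(k−1,t) + Σ_k C(r−1,2k−1)C(k−1,t−1), where C denotes the binomial coefficient and the sums range over all integers k for which the binomials are nonzero. -/
/-- `Σ_k C(r,2k)C(k,t) = Σ_k C(r,2k−1)C(k−1,t) + Σ_k C(r−1,2k−1)C(k−1,t−1)`,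
with the convention `C(n,j) = 0` for `j < 0` or `j > n` (the sums on the right are
reindexed by `k ↦ k+1`, and the term `C(k−1,t−1)` vanishes when `t = 0`). -/
theorem binom_identity_one (r t : ℕ) (hr : 1 ≤ r) :
    ∑ k ∈ Finset.range (r + 2), r.choose (2 * k) * k.choose t =
      (∑ k ∈ Finset.range (r + 2), r.choose (2 * k + 1) * k.choose t) +
      ∑ k ∈ Finset.range (r + 2),
        (r - 1).choose (2 * k + 1) * (if t = 0 then 0 else k.choose (t - 1)) := by
  obtain ⟨s, rfl⟩ : ∃ s, r = s + 1 := ⟨r - 1, (Nat.succ_pred_eq_of_pos hr).symm⟩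
  simp only [Nat.add_sub_cancel]
  have htail : s.choose (2 * (s + 2) + 1) = 0 :=
    Nat.choose_eq_zero_of_lt (by omega)
  -- drop the vanishing last term of sums with odd index in `s.choose`
  have hsplit : ∀ g : ℕ → ℕ,
      ∑ k ∈ Finset.range (s + 1 + 2), s.choose (2 * k + 1) * g k
      = ∑ k ∈ Finset.range (s + 2), s.choose (2 * k + 1) * g k := by
    intro g
    rw [show s + 1 + 2 = (s + 2) + 1 from rfl, Finset.sum_range_succ, htail,
      Nat.zero_mul, Nat.add_zero]
  -- RHS first sum splits by Pascal
  have hR : ∑ k ∈ Finset.range (s + 1 + 2), (s + 1).choose (2 * k + 1) * k.choose t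
      = (∑ k ∈ Finset.range (s + 1 + 2), s.choose (2 * k) * k.choose t)
        + ∑ k ∈ Finset.range (s + 1 + 2), s.choose (2 * k + 1) * k.choose t := by
    rw [← Finset.sum_add_distrib]
    refine Finset.sum_congr rfl fun k _ => ?_
    rw [Nat.choose_succ_succ' s (2 * k), Nat.add_mul]
  -- middle sum
  have hM : ∑ j ∈ Finset.range (s + 2), s.choose (2 * j + 1) * (j + 1).choose t
      = (∑ k ∈ Finset.range (s + 1 + 2), s.choose (2 * k + 1) * k.choose t)
        + ∑ k ∈ Finset.range (s + 1 + 2),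
            s.choose (2 * k + 1) * (if t = 0 then 0 else k.choose (t - 1)) := by
    rw [hsplit, hsplit]
    rcases t with _ | u
    · simp
    · simp only [Nat.succ_ne_zero, if_false, Nat.add_sub_cancel]
      rw [← Finset.sum_add_distrib]
      refine Finset.sum_congr rfl fun j _ => ?_
      rw [Nat.choose_succ_succ' j u, Nat.mul_add]
      omega
  -- LHS
  have hL : ∑ k ∈ Finset.range (s + 1 + 2), (s + 1).choose (2 * k) * k.choose t
      = (∑ j ∈ Finset.range (s + 2), s.choose (2 * j + 1) * (j + 1).choose t)
        + ∑ k ∈ Finset.range (s + 1 + 2), s.choose (2 * k) * k.choose t := by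
    have e1 : ∑ k ∈ Finset.range (s + 2 + 1), (s + 1).choose (2 * k) * k.choose t
        = (∑ j ∈ Finset.range (s + 2), (s + 1).choose (2 * (j + 1)) * (j + 1).choose t)
          + Nat.choose 0 t := by
      rw [Finset.sum_range_succ']; simp
    have e2 : ∑ k ∈ Finset.range (s + 2 + 1), s.choose (2 * k) * k.choose t
        = (∑ j ∈ Finset.range (s + 2), s.choose (2 * (j + 1)) * (j + 1).choose t)
          + Nat.choose 0 t := by
      rw [Finset.sum_range_succ']; simp
    have e3 : ∑ j ∈ Finset.range (s + 2), (s + 1).choose (2 * (j + 1)) * (j + 1).choose t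
        = (∑ j ∈ Finset.range (s + 2), s.choose (2 * j + 1) * (j + 1).choose t)
          + ∑ j ∈ Finset.range (s + 2), s.choose (2 * (j + 1)) * (j + 1).choose t := by
      rw [← Finset.sum_add_distrib]
      refine Finset.sum_congr rfl fun j _ => ?_
      rw [show 2 * (j + 1) = (2 * j + 1) + 1 by ring, Nat.choose_succ_succ' s (2 * j + 1),
        Nat.add_mul]
    rw [show s + 1 + 2 = s + 2 + 1 from rfl, e1, e2, e3]
    omega
  rw [hL, hR, hM]
  ring
end

section
/- For all real x with |x| ≤ 1/√3, 1/cos²(x) ≤ 1 + x² + x⁴. -/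
/-- For all real `x` with `|x| ≤ 1/√3`, `1/cos²x ≤ 1 + x² + x⁴`. -/
theorem one_div_cos_sq_le (x : ℝ) (hx : |x| ≤ 1 / Real.sqrt 3) :
    1 / Real.cos x ^ 2 ≤ 1 + x ^ 2 + x ^ 4 := by
  have h3 : Real.sqrt 3 > 0 := Real.sqrt_pos.mpr (by norm_num)
  have ht : x ^ 2 ≤ 1 / 3 := by
    have := sq_abs x ▸ pow_le_pow_left₀ (abs_nonneg x) hx 2
    rw [div_pow, one_pow, Real.sq_sqrt (by norm_num : (3:ℝ) ≥ 0)] at this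
    linarith
  have hc : 1 - x ^ 2 / 2 ≤ Real.cos x := Real.one_sub_sq_div_two_le_cos
  have hcpos : (0:ℝ) < 1 - x ^ 2 / 2 := by nlinarith
  have hcsq : (1 - x ^ 2 / 2) ^ 2 ≤ Real.cos x ^ 2 := by
    apply pow_le_pow_left₀ hcpos.le hc
  rw [div_le_iff₀ (pow_pos (hcpos.trans_le hc) 2)]
  nlinarith [sq_nonneg x, sq_nonneg (x^2), sq_nonneg (x^3), mul_nonneg (sq_nonneg (x^2)) (by linarith : (0:ℝ) ≤ 1/3 - x^2)]
end
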